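/- For the randomized Gauss-Seidel scheme in which at each step a uniformly random coordinate i ∈ {1,…,N} of the error vector y ∈ ℝ^N is replaced so that the new i-th squared entry is at most δ²·Σⱼ W_ij y_j² (others unchanged), the conditional expected squared norm contracts: E[‖y⁺‖² | y] ≤ (1 − (1/N)(1 − δ²))·‖y‖². -/

import Mathlib

/-!
Summing over the picked index `i`, each `y j ^ 2` survives the `N - 1` updates that do not
touch `j`, while the updated entries contribute at most `δ² ∑ᵢ ∑ⱼ W i j y_j²`, which equals
`δ² ‖y‖²` because the columns of the symmetric, row-stochastic `W` also sum to one.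
-/

open Finset

section

variable {ι : Type*} [Fintype ι] [DecidableEq ι]

theorem sum_eq_sum_sub_add_of_forall_ne {M : Type*} [AddCommGroup M] {x y : ι → M} {i : ι}
    (h : ∀ j, j ≠ i → x j = y j) : ∑ j, x j = ∑ j, y j - y i + x i := by
  rw [← add_sum_erase _ x (mem_univ i), ← add_sum_erase _ y (mem_univ i),
    sum_congr rfl fun j hj => h j (ne_of_mem_erase hj)]
  abel

omit [DecidableEq ι] in
theorem sum_sum_mul_eq_sum_of_sum_col_eq_one {R : Type*} [CommSemiring R] {W : ι → ι → R}
    (hcol : ∀ j, ∑ i, W i j = 1) (v : ι → R) : ∑ i, ∑ j, W i j * v j = ∑ j, v j := by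
  rw [sum_comm]
  simp only [← sum_mul, hcol, one_mul]

theorem sum_sum_sq_le_of_coordinate_updates {W : ι → ι → ℝ} (hcol : ∀ j, ∑ i, W i j = 1)
    {δ : ℝ} {y : ι → ℝ} {yplus : ι → ι → ℝ}
    (hupdate : ∀ i, yplus i i ^ 2 ≤ δ ^ 2 * ∑ j, W i j * y j ^ 2)
    (hrest : ∀ i j, j ≠ i → yplus i j = y j) :
    ∑ i, ∑ j, yplus i j ^ 2 ≤ (Fintype.card ι - (1 - δ ^ 2)) * ∑ j, y j ^ 2 := by
  calc ∑ i, ∑ j, yplus i j ^ 2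
      = ∑ i, (∑ j, y j ^ 2 - y i ^ 2 + yplus i i ^ 2) :=
        sum_congr rfl fun i _ => sum_eq_sum_sub_add_of_forall_ne fun j hj => by rw [hrest i j hj]
    _ ≤ ∑ i, (∑ j, y j ^ 2 - y i ^ 2 + δ ^ 2 * ∑ j, W i j * y j ^ 2) := by
        gcongr with i; exact hupdate i
    _ = (Fintype.card ι - (1 - δ ^ 2)) * ∑ j, y j ^ 2 := by
        simp only [sum_add_distrib, sum_sub_distrib, ← mul_sum,
          sum_sum_mul_eq_sum_of_sum_col_eq_one hcol, sum_const, card_univ, nsmul_eq_mul]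
        ring

end

theorem randomized_gauss_seidel_expected_contraction_general
    {N : ℕ} (W : Matrix (Fin N) (Fin N) ℝ)
    (hsymm : W.IsSymm)
    (hrow : ∀ i, ∑ j, W i j = 1)
    (δ : ℝ)
    (y : Fin N → ℝ)
    (yplus : Fin N → (Fin N → ℝ))  -- `yplus i` is the new vector when index `i` is picked
    (hupdate : ∀ i, (yplus i i) ^ 2 ≤ δ ^ 2 * ∑ j, W i j * (y j) ^ 2)
    (hrest : ∀ i j, j ≠ i → yplus i j = y j) :
    (1 / (N : ℝ)) * ∑ i, ∑ j, (yplus i j) ^ 2 ≤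
      (1 - (1 / (N : ℝ)) * (1 - δ ^ 2)) * ∑ j, (y j) ^ 2 := by
  obtain rfl | hN := N.eq_zero_or_pos
  · simp
  have hcol : ∀ j, ∑ i, W i j = 1 := fun j => by simpa only [hsymm.apply] using hrow j
  have hsum := sum_sum_sq_le_of_coordinate_updates hcol hupdate hrest
  rw [Fintype.card_fin] at hsum
  calc (1 / (N : ℝ)) * ∑ i, ∑ j, yplus i j ^ 2
      ≤ (1 / (N : ℝ)) * ((N - (1 - δ ^ 2)) * ∑ j, y j ^ 2) := by gcongr
    _ = (1 - (1 / (N : ℝ)) * (1 - δ ^ 2)) * ∑ j, y j ^ 2 := by field_simp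

/-- one step of the randomized Gauss-Seidel scheme, where a uniformly
random coordinate is replaced, contracts the expected squared norm by the factor
`1 − (1/N)(1 − δ²)`. -/
theorem randomized_gauss_seidel_expected_contraction
    {N : ℕ} (hN : 0 < N) (W : Matrix (Fin N) (Fin N) ℝ)
    (hsymm : W.IsSymm) (hnonneg : ∀ i j, 0 ≤ W i j)
    (hrow : ∀ i, ∑ j, W i j = 1)
    (δ : ℝ) (hδ0 : 0 ≤ δ) (hδ1 : δ < 1)
    (y : Fin N → ℝ)
    (yplus : Fin N → (Fin N → ℝ))  -- `yplus i` is the new vector when index `i` is picked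
    (hupdate : ∀ i, (yplus i i) ^ 2 ≤ δ ^ 2 * ∑ j, W i j * (y j) ^ 2)
    (hrest : ∀ i j, j ≠ i → yplus i j = y j) :
    (1 / (N : ℝ)) * ∑ i, ∑ j, (yplus i j) ^ 2 ≤
      (1 - (1 / (N : ℝ)) * (1 - δ ^ 2)) * ∑ j, (y j) ^ 2 :=
  randomized_gauss_seidel_expected_contraction_general W hsymm hrow δ y yplus hupdate hrest
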